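/- Let V be a quasifinite irreducible ℤ-graded L-module which is a generalized highest weight module (for some ℤ-basis of ℤ²). Then V is a highest weight module or a lowest weight module. -/

import Mathlib

open scoped BigOperators

noncomputable section

namespace QTorus

/-- The sign `(−1)^{a·i}` for `i ∈ ℤ/2ℤ`: it is `(−1)^a` if `i = 1` and `1` if `i = 0`. -/
def sgn (a : ℤ) (i : ZMod 2) : ℂ := if i = 0 then 1 else (-1 : ℂ) ^ a

/-- `q` is generic: nonzero and not a root of unity. -/
def Generic (q : ℂ) : Prop := q ≠ 0 ∧ ∀ n : ℤ, n ≠ 0 → q ^ n ≠ 1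

/-- `{b1, b2}` is a ℤ-basis of `ℤ²`. -/
def IsZBasis (b1 b2 : ℤ × ℤ) : Prop :=
  b1.1 * b2.2 - b1.2 * b2.1 = 1 ∨ b1.1 * b2.2 - b1.2 * b2.1 = -1

/-- The determinant `α = m11 m22 − m12 m21`. -/
def detZ (m₁ m₂ : ℤ × ℤ) : ℤ := m₁.1 * m₂.2 - m₁.2 * m₂.1

/-- Presentation of the Lie algebra `L` of the paper: basis
`{t_0^i t^m : i ∈ ℤ/2ℤ, m ∈ ℤ²} ∖ {t_0^0 t^{(0,0)}}` together with the central elements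
`c1, c2`, where `t_0^0 t^{(0,0)}` is read as `0`, and the Lie bracket of the paper. -/
structure LData (q : ℂ) (L : Type) [LieRing L] [LieAlgebra ℂ L] where
  t : ZMod 2 → ℤ × ℤ → L
  c1 : L
  c2 : L
  t00 : t 0 (0, 0) = 0
  indep : LinearIndependent ℂ
    (Sum.elim (fun x : {p : ZMod 2 × (ℤ × ℤ) // p ≠ (0, (0, 0))} => t x.1.1 x.1.2)
      (fun k : Fin 2 => if k = 0 then c1 else c2))
  span_eq : Submodule.span ℂ
    ((Set.range fun p : ZMod 2 × (ℤ × ℤ) => t p.1 p.2) ∪ {c1, c2}) = ⊤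
  bracket_tt : ∀ (i j : ZMod 2) (m n : ℤ × ℤ),
    ⁅t i m, t j n⁆ =
      (sgn m.1 j * q ^ (m.2 * n.1) - sgn n.1 i * q ^ (m.1 * n.2)) •
          t (i + j) (m.1 + n.1, m.2 + n.2) +
        (if i + j = 0 ∧ m + n = 0 then sgn m.1 j * q ^ (m.2 * n.1) else 0) •
          ((m.1 : ℂ) • c1 + (m.2 : ℂ) • c2)
  c1_central : ∀ x : L, ⁅c1, x⁆ = 0
  c2_central : ∀ x : L, ⁅c2, x⁆ = 0

variable {q : ℂ} {L : Type} [LieRing L] [LieAlgebra ℂ L]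

/-- The degree-`j` component of the ℤ-grading of `L` associated with the ℤ-basis
`{m₁, m₂}` of `ℤ²`. -/
def Lj (D : LData q L) (m₁ m₂ : ℤ × ℤ) (j : ℤ) : Submodule ℂ L :=
  Submodule.span ℂ
    ((Set.range fun p : ZMod 2 × ℤ => D.t p.1 (j • m₁ + p.2 • m₂)) ∪
      if j = 0 then {D.c1, D.c2} else ∅)

/-- A ℤ-graded module structure on an `L`-module `V`. -/
structure GradedRep (D : LData q L) (m₁ m₂ : ℤ × ℤ) (V : Type) [AddCommGroup V]
    [Module ℂ V] [LieRingModule L V] [LieModule ℂ L V] where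
  comp : ℤ → Submodule ℂ V
  internal : DirectSum.IsInternal comp
  lie_mem : ∀ (j k : ℤ), ∀ x ∈ Lj D m₁ m₂ j, ∀ v ∈ comp k, ⁅x, v⁆ ∈ comp (k + j)

variable {D : LData q L} {m₁ m₂ : ℤ × ℤ} {V : Type} [AddCommGroup V] [Module ℂ V]
  [LieRingModule L V] [LieModule ℂ L V]

/-- A Lie submodule is graded if it is the sum of its homogeneous pieces. -/
def GradedRep.IsGradedSub (G : GradedRep D m₁ m₂ V) (N : LieSubmodule ℂ L V) : Prop :=
  (N : Submodule ℂ V) = ⨆ k : ℤ, (N : Submodule ℂ V) ⊓ G.comp k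

/-- Irreducibility as a ℤ-graded module. -/
def GradedRep.IsIrreducible (G : GradedRep D m₁ m₂ V) : Prop :=
  (∃ v : V, v ≠ 0) ∧ ∀ N : LieSubmodule ℂ L V, G.IsGradedSub N → N = ⊥ ∨ N = ⊤

/-- Quasifiniteness: all homogeneous components are finite dimensional. -/
def GradedRep.Quasifinite (G : GradedRep D m₁ m₂ V) : Prop :=
  ∀ k : ℤ, FiniteDimensional ℂ (G.comp k)

/-- Uniform boundedness of the dimensions of the homogeneous components. -/
def GradedRep.UniformlyBounded (G : GradedRep D m₁ m₂ V) : Prop :=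
  ∃ N : ℕ, ∀ k : ℤ, Module.rank ℂ (G.comp k) ≤ (N : Cardinal)

/-- Generalized highest weight module corresponding to the ℤ-basis `{b1, b2}`. -/
def GradedRep.IsGHWFor (G : GradedRep D m₁ m₂ V) (b1 b2 : ℤ × ℤ) : Prop :=
  IsZBasis b1 b2 ∧
    ∃ (dg : ℤ) (v : V), v ∈ G.comp dg ∧ v ≠ 0 ∧
      LieSubmodule.lieSpan ℂ L {v} = ⊤ ∧
      ∀ (a b : ℕ) (i : ZMod 2), ⁅D.t i ((a : ℤ) • b1 + (b : ℤ) • b2), v⁆ = 0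

/-- Generalized highest weight module. -/
def GradedRep.IsGHW (G : GradedRep D m₁ m₂ V) : Prop := ∃ b1 b2 : ℤ × ℤ, G.IsGHWFor b1 b2

/-- Highest weight module. -/
def GradedRep.IsHW (G : GradedRep D m₁ m₂ V) : Prop :=
  ∃ (dg : ℤ) (v : V), v ∈ G.comp dg ∧ v ≠ 0 ∧ LieSubmodule.lieSpan ℂ L {v} = ⊤ ∧
    ∀ j : ℤ, 0 < j → ∀ x ∈ Lj D m₁ m₂ j, ⁅x, v⁆ = 0

/-- Lowest weight module. -/
def GradedRep.IsLW (G : GradedRep D m₁ m₂ V) : Prop :=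
  ∃ (dg : ℤ) (v : V), v ∈ G.comp dg ∧ v ≠ 0 ∧ LieSubmodule.lieSpan ℂ L {v} = ⊤ ∧
    ∀ j : ℤ, j < 0 → ∀ x ∈ Lj D m₁ m₂ j, ⁅x, v⁆ = 0

-- Even-case highest/lowest weight realizations
/-- `G` realizes `M^+(ψ, m₁, m₂)` with highest degree `d₀` (for `m₂.1` even; the linear
function `ψ` on `L₀` is recorded by its values `ψt i k = ψ(t_0^i t^{k m₂})`, `ψ1 = ψ(c1)`,
`ψ2 = ψ(c2)`). -/
def GradedRep.IsMplusEvenAt (G : GradedRep D m₁ m₂ V) (ψt : ZMod 2 → ℤ → ℂ) (ψ1 ψ2 : ℂ)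
    (d₀ : ℤ) : Prop :=
  G.IsIrreducible ∧ (∀ k : ℤ, d₀ < k → G.comp k = ⊥) ∧
    ∃ v : V, v ≠ 0 ∧ v ∈ G.comp d₀ ∧ G.comp d₀ = Submodule.span ℂ {v} ∧
      (∀ j : ℤ, 0 < j → ∀ x ∈ Lj D m₁ m₂ j, ⁅x, v⁆ = 0) ∧
      (∀ (i : ZMod 2) (k : ℤ), ⁅D.t i (k • m₂), v⁆ = ψt i k • v) ∧
      ⁅D.c1, v⁆ = ψ1 • v ∧ ⁅D.c2, v⁆ = ψ2 • v

def GradedRep.IsMplusEven (G : GradedRep D m₁ m₂ V) (ψt : ZMod 2 → ℤ → ℂ) (ψ1 ψ2 : ℂ) : Prop :=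
  ∃ d₀ : ℤ, G.IsMplusEvenAt ψt ψ1 ψ2 d₀

def GradedRep.IsMminusEvenAt (G : GradedRep D m₁ m₂ V) (ψt : ZMod 2 → ℤ → ℂ) (ψ1 ψ2 : ℂ)
    (d₀ : ℤ) : Prop :=
  G.IsIrreducible ∧ (∀ k : ℤ, k < d₀ → G.comp k = ⊥) ∧
    ∃ v : V, v ≠ 0 ∧ v ∈ G.comp d₀ ∧ G.comp d₀ = Submodule.span ℂ {v} ∧
      (∀ j : ℤ, j < 0 → ∀ x ∈ Lj D m₁ m₂ j, ⁅x, v⁆ = 0) ∧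
      (∀ (i : ZMod 2) (k : ℤ), ⁅D.t i (k • m₂), v⁆ = ψt i k • v) ∧
      ⁅D.c1, v⁆ = ψ1 • v ∧ ⁅D.c2, v⁆ = ψ2 • v

def GradedRep.IsMminusEven (G : GradedRep D m₁ m₂ V) (ψt : ZMod 2 → ℤ → ℂ) (ψ1 ψ2 : ℂ) : Prop :=
  ∃ d₀ : ℤ, G.IsMminusEvenAt ψt ψ1 ψ2 d₀

/-- An exp-polynomial linear function on `L₀` (case `m₂.1` even). -/
def ExpPolyEven (q : ℂ) (m₁ m₂ : ℤ × ℤ) (ψt : ZMod 2 → ℤ → ℂ) (ψ1 ψ2 : ℂ) : Prop :=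
  ∃ (r : ℕ) (sdeg : Fin r → ℕ) (b : Fin r → ℕ → ZMod 2 → ℂ) (A : Fin r → ℂ),
    1 ≤ r ∧ (∀ k, A k ≠ 0) ∧
    (∀ i : ℤ, i ≠ 0 → ∀ j : ZMod 2,
      ψt j i =
        (∑ k, (∑ l ∈ Finset.range (sdeg k + 1), b k l j * (i : ℂ) ^ l) * A k ^ i) /
          ((1 - sgn 1 j * q ^ (i * (m₁.1 * m₂.2 - m₁.2 * m₂.1))) *
            q ^ (i ^ 2 * (m₂.1 / 2) * m₂.2))) ∧
    ((m₁.1 : ℂ) * ψ1 + (m₁.2 : ℂ) * ψ2 = ∑ k, b k 0 0) ∧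
    (ψt 1 0 = (1 / 2) * ∑ k, b k 0 1)

-- sl2 representations and tensor products
/-- An `sl₂(ℂ)`-module structure on `W`: operators `e, f, h` satisfying the `sl₂` relations. -/
structure Sl2Rep (W : Type) [AddCommGroup W] [Module ℂ W] where
  e : Module.End ℂ W
  f : Module.End ℂ W
  h : Module.End ℂ W
  rel_he : h * e - e * h = (2 : ℂ) • e
  rel_hf : h * f - f * h = -((2 : ℂ) • f)
  rel_ef : e * f - f * e = h

/-- Irreducibility of an `sl₂(ℂ)`-module. -/
def Sl2Rep.Irreducible {W : Type} [AddCommGroup W] [Module ℂ W] (ρ : Sl2Rep W) : Prop :=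
  (∃ w : W, w ≠ 0) ∧ ∀ U : Submodule ℂ W,
    (∀ w ∈ U, ρ.e w ∈ U ∧ ρ.f w ∈ U ∧ ρ.h w ∈ U) → U = ⊥ ∨ U = ⊤

/-- The tensor product `V_1 ⊗ ⋯ ⊗ V_ν` with `V_i = ℂ^{d i}`. -/
abbrev Tens {ν : ℕ} (d : Fin ν → ℕ) : Type := PiTensorProduct ℂ (fun i => Fin (d i) → ℂ)

/-- The operator `id ⊗ ⋯ ⊗ φ ⊗ ⋯ ⊗ id` acting in the `i`-th tensor factor. -/
def inFactor {ν : ℕ} (d : Fin ν → ℕ) (i : Fin ν)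
    (φ : (Fin (d i) → ℂ) →ₗ[ℂ] (Fin (d i) → ℂ)) : Tens d →ₗ[ℂ] Tens d :=
  PiTensorProduct.map (Function.update (fun j => LinearMap.id) i φ)

/-- Action of `t_0^1 t^{2j m₂}` on `V(μ, ψ)`. -/
def hAct (q : ℂ) (m₂ : ℤ × ℤ) {ν : ℕ} (μ : Fin ν → ℂ) (d : Fin ν → ℕ)
    (ρ : ∀ i, Sl2Rep (Fin (d i) → ℂ)) (j : ℤ) : Tens d →ₗ[ℂ] Tens d :=
  (-(q ^ (-(2 * j ^ 2 * m₂.2 * m₂.1)))) • ∑ i : Fin ν, μ i ^ j • inFactor d i (ρ i).h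

/-- Action of `t_0^k t^{(2j+1) m₂}` on `V(μ, ψ)`; here `s` is a square root of `q`, so that
`s^{-(2j+1)² m22 m21} = q^{-(1/2)(2j+1)² m22 m21}`. -/
def oddAct (s : ℂ) (m₂ : ℤ × ℤ) {ν : ℕ} (μ : Fin ν → ℂ) (d : Fin ν → ℕ)
    (ρ : ∀ i, Sl2Rep (Fin (d i) → ℂ)) (k : ZMod 2) (j : ℤ) : Tens d →ₗ[ℂ] Tens d :=
  s ^ (-((2 * j + 1) ^ 2 * m₂.2 * m₂.1)) •
    (sgn 1 k • ∑ i : Fin ν, μ i ^ j • inFactor d i (ρ i).e +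
      ∑ i : Fin ν, μ i ^ (j + 1) • inFactor d i (ρ i).f)

/-- `G` realizes `M^+(μ, ψ, m₁, m₂)` with highest degree `d₀` (case `m₂.1` odd): the top
homogeneous component is a copy of `V(μ, ψ) = V_1 ⊗ ⋯ ⊗ V_ν` with its `L₀`-action,
killed by `L_+`, and `G` is irreducible ℤ-graded.  The linear function `ψ` is recorded via
`ψA j = ψ(t_0^0 t^{2j m₂})`, `ψβ = ψ(β)` and `ψc = ψ(m21 c1 + m22 c2)`. -/
def GradedRep.IsMplusOddAt (G : GradedRep D m₁ m₂ V) (s : ℂ) {ν : ℕ} (μ : Fin ν → ℂ)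
    (d : Fin ν → ℕ) (ρ : ∀ i, Sl2Rep (Fin (d i) → ℂ)) (ψA : ℤ → ℂ) (ψβ ψc : ℂ)
    (d₀ : ℤ) : Prop :=
  G.IsIrreducible ∧ (∀ k : ℤ, d₀ < k → G.comp k = ⊥) ∧
    ∃ ι : Tens d →ₗ[ℂ] V, Function.Injective ι ∧ LinearMap.range ι = G.comp d₀ ∧
      (∀ j : ℤ, 0 < j → ∀ x ∈ Lj D m₁ m₂ j, ∀ w : Tens d, ⁅x, ι w⁆ = 0) ∧
      (∀ (j : ℤ) (w : Tens d), ⁅D.t 0 ((2 * j) • m₂), ι w⁆ = ψA j • ι w) ∧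
      (∀ (j : ℤ) (w : Tens d), ⁅D.t 1 ((2 * j) • m₂), ι w⁆ = ι (hAct q m₂ μ d ρ j w)) ∧
      (∀ (k : ZMod 2) (j : ℤ) (w : Tens d),
        ⁅D.t k ((2 * j + 1) • m₂), ι w⁆ = ι (oddAct s m₂ μ d ρ k j w)) ∧
      (∀ w : Tens d, ⁅(m₂.1 : ℂ) • D.c1 + (m₂.2 : ℂ) • D.c2, ι w⁆ = ψc • ι w) ∧
      (∀ w : Tens d, ⁅(m₁.1 : ℂ) • D.c1 + (m₁.2 : ℂ) • D.c2, ι w⁆ = ψβ • ι w)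

def GradedRep.IsMplusOdd (G : GradedRep D m₁ m₂ V) (s : ℂ) {ν : ℕ} (μ : Fin ν → ℂ)
    (d : Fin ν → ℕ) (ρ : ∀ i, Sl2Rep (Fin (d i) → ℂ)) (ψA : ℤ → ℂ) (ψβ ψc : ℂ) : Prop :=
  ∃ d₀ : ℤ, G.IsMplusOddAt s μ d ρ ψA ψβ ψc d₀

def GradedRep.IsMminusOddAt (G : GradedRep D m₁ m₂ V) (s : ℂ) {ν : ℕ} (μ : Fin ν → ℂ)
    (d : Fin ν → ℕ) (ρ : ∀ i, Sl2Rep (Fin (d i) → ℂ)) (ψA : ℤ → ℂ) (ψβ ψc : ℂ)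
    (d₀ : ℤ) : Prop :=
  G.IsIrreducible ∧ (∀ k : ℤ, k < d₀ → G.comp k = ⊥) ∧
    ∃ ι : Tens d →ₗ[ℂ] V, Function.Injective ι ∧ LinearMap.range ι = G.comp d₀ ∧
      (∀ j : ℤ, j < 0 → ∀ x ∈ Lj D m₁ m₂ j, ∀ w : Tens d, ⁅x, ι w⁆ = 0) ∧
      (∀ (j : ℤ) (w : Tens d), ⁅D.t 0 ((2 * j) • m₂), ι w⁆ = ψA j • ι w) ∧
      (∀ (j : ℤ) (w : Tens d), ⁅D.t 1 ((2 * j) • m₂), ι w⁆ = ι (hAct q m₂ μ d ρ j w)) ∧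
      (∀ (k : ZMod 2) (j : ℤ) (w : Tens d),
        ⁅D.t k ((2 * j + 1) • m₂), ι w⁆ = ι (oddAct s m₂ μ d ρ k j w)) ∧
      (∀ w : Tens d, ⁅(m₂.1 : ℂ) • D.c1 + (m₂.2 : ℂ) • D.c2, ι w⁆ = ψc • ι w) ∧
      (∀ w : Tens d, ⁅(m₁.1 : ℂ) • D.c1 + (m₁.2 : ℂ) • D.c2, ι w⁆ = ψβ • ι w)

def GradedRep.IsMminusOdd (G : GradedRep D m₁ m₂ V) (s : ℂ) {ν : ℕ} (μ : Fin ν → ℂ)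
    (d : Fin ν → ℕ) (ρ : ∀ i, Sl2Rep (Fin (d i) → ℂ)) (ψA : ℤ → ℂ) (ψβ ψc : ℂ) : Prop :=
  ∃ d₀ : ℤ, G.IsMminusOddAt s μ d ρ ψA ψβ ψc d₀

/-- An exp-polynomial linear function on `𝒜 ⊕ ℂβ` (case `m₂.1` odd). -/
def ExpPolyOdd (q : ℂ) (m₁ m₂ : ℤ × ℤ) (ψA : ℤ → ℂ) (ψβ : ℂ) : Prop :=
  ∃ (r : ℕ) (sdeg : Fin r → ℕ) (b : Fin r → ℕ → ℂ) (A : Fin r → ℂ),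
    1 ≤ r ∧ (∀ k, A k ≠ 0) ∧
    (∀ i : ℤ, i ≠ 0 →
      ψA i = (∑ k, (∑ l ∈ Finset.range (sdeg k + 1), b k l * (i : ℂ) ^ l) * A k ^ i) /
        ((1 - q ^ (2 * i * (m₁.1 * m₂.2 - m₁.2 * m₂.1))) * q ^ (2 * i ^ 2 * m₂.1 * m₂.2))) ∧
    ψβ = ∑ k, b k 0

/-!
Replacing `b₁` or `b₂` by `b₁ + b₂` shrinks the cone `ℕ b₁ + ℕ b₂` killing the generator `v`, so by
Euclid's algorithm both may be taken of degree `≥ 0` (or both `≤ 0`, which is the same argument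
for the reversed grading). Brackets with `t_0^j t^n` only shift a cone killing a vector, so every
vector is killed by a shifted cone, and by quasifiniteness one cone serves a whole component `V_e`.

For generic `q`, `⁅t_0^0 t^m, t_0^i t^y⁆` is a nonzero multiple of `t_0^i t^{m+y}` when `m, y` are
not parallel. Writing `x = m + y` with `m` in the cone and `deg y = -1`, this shows that `V_e` is
killed by a half-plane `deg x ≥ t`; and if the least such `t(e)` is at least `2`, the same
decomposition with `deg m = t(e)` shows `t(e - 1) > t(e)`. Hence `t(e) = 1` for a nonzero `V_e`
far enough up, or for the top nonzero component. A nonzero vector of that `V_e` is a highest weight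
vector, and it generates `V` because its Lie span is a graded submodule.
-/

section Lattice

variable {b₁ b₂ : ℤ × ℤ}

/-- The coordinates with respect to `b₁, b₂`, by Cramer's rule: for a `ℤ`-basis, `detZ b₁ b₂ = ±1`
is its own inverse. -/
def coord₁ (b₁ b₂ : ℤ × ℤ) : ℤ × ℤ →ₗ[ℤ] ℤ where
  toFun x := detZ b₁ b₂ * detZ x b₂
  map_add' x y := by simp only [detZ, Prod.fst_add, Prod.snd_add]; ring
  map_smul' a x := by
    simp only [detZ, Prod.smul_fst, Prod.smul_snd, smul_eq_mul, eq_intCast, Int.cast_id]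
    ring

def coord₂ (b₁ b₂ : ℤ × ℤ) : ℤ × ℤ →ₗ[ℤ] ℤ where
  toFun x := detZ b₁ b₂ * detZ b₁ x
  map_add' x y := by simp only [detZ, Prod.fst_add, Prod.snd_add]; ring
  map_smul' a x := by
    simp only [detZ, Prod.smul_fst, Prod.smul_snd, smul_eq_mul, eq_intCast, Int.cast_id]
    ring

lemma coord₁_apply (x : ℤ × ℤ) : coord₁ b₁ b₂ x = detZ b₁ b₂ * detZ x b₂ := rfl

lemma coord₂_apply (x : ℤ × ℤ) : coord₂ b₁ b₂ x = detZ b₁ b₂ * detZ b₁ x := rfl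

lemma coord₁_neg_left (x : ℤ × ℤ) : coord₁ (-b₁) b₂ x = -coord₁ b₁ b₂ x := by
  simp only [coord₁_apply, detZ, Prod.fst_neg, Prod.snd_neg]; ring

namespace IsZBasis

lemma detZ_mul_self (h : IsZBasis b₁ b₂) : detZ b₁ b₂ * detZ b₁ b₂ = 1 := by
  rcases h with h | h <;> rw [detZ, h] <;> norm_num

lemma neg_left (h : IsZBasis b₁ b₂) : IsZBasis (-b₁) b₂ := by
  simp only [IsZBasis, Prod.fst_neg, Prod.snd_neg] at h ⊢
  rcases h with h | h
  · right; linear_combination -h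
  · left; linear_combination -h

lemma add_left (h : IsZBasis b₁ b₂) : IsZBasis (b₁ + b₂) b₂ := by
  simp only [IsZBasis, Prod.fst_add, Prod.snd_add] at h ⊢
  rcases h with h | h
  · left; linear_combination h
  · right; linear_combination h

lemma add_right (h : IsZBasis b₁ b₂) : IsZBasis b₁ (b₁ + b₂) := by
  simp only [IsZBasis, Prod.fst_add, Prod.snd_add] at h ⊢
  rcases h with h | h
  · left; linear_combination h
  · right; linear_combination h

lemma coord₁_smul_add_smul (h : IsZBasis b₁ b₂) (a b : ℤ) : coord₁ b₁ b₂ (a • b₁ + b • b₂) = a := by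
  have h₁ := h.detZ_mul_self
  simp only [coord₁_apply, detZ, Prod.fst_add, Prod.snd_add, Prod.smul_fst, Prod.smul_snd,
    smul_eq_mul] at h₁ ⊢
  linear_combination a * h₁

lemma coord₂_smul_add_smul (h : IsZBasis b₁ b₂) (a b : ℤ) : coord₂ b₁ b₂ (a • b₁ + b • b₂) = b := by
  have h₁ := h.detZ_mul_self
  simp only [coord₂_apply, detZ, Prod.fst_add, Prod.snd_add, Prod.smul_fst, Prod.smul_snd,
    smul_eq_mul] at h₁ ⊢
  linear_combination b * h₁

lemma coord₁_smul_add_coord₂_smul (h : IsZBasis b₁ b₂) (x : ℤ × ℤ) :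
    coord₁ b₁ b₂ x • b₁ + coord₂ b₁ b₂ x • b₂ = x := by
  have h₁ := h.detZ_mul_self
  simp only [coord₁_apply, coord₂_apply, detZ] at h₁ ⊢
  ext <;> simp only [Prod.fst_add, Prod.snd_add, Prod.smul_fst, Prod.smul_snd, smul_eq_mul]
  · linear_combination x.1 * h₁
  · linear_combination x.2 * h₁

lemma coord₁_fst (h : IsZBasis b₁ b₂) : coord₁ b₁ b₂ b₁ = 1 := by
  simpa using h.coord₁_smul_add_smul 1 0

lemma coord₁_snd (h : IsZBasis b₁ b₂) : coord₁ b₁ b₂ b₂ = 0 := by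
  simpa using h.coord₁_smul_add_smul 0 1

lemma coord₂_fst (h : IsZBasis b₁ b₂) : coord₂ b₁ b₂ b₁ = 0 := by
  simpa using h.coord₂_smul_add_smul 1 0

lemma coord₂_snd (h : IsZBasis b₁ b₂) : coord₂ b₁ b₂ b₂ = 1 := by
  simpa using h.coord₂_smul_add_smul 0 1

/-- Two distinct vectors of the same degree differ by a nonzero multiple of `m₂`, which is not
parallel to any vector of nonzero degree. -/
lemma detZ_ne_zero_or_detZ_ne_zero {m₁ m₂ : ℤ × ℤ} (hb : IsZBasis m₁ m₂) {m m' x : ℤ × ℤ}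
    (hne : m ≠ m') (hdeg : coord₁ m₁ m₂ m = coord₁ m₁ m₂ m') (hx : coord₁ m₁ m₂ x ≠ 0) :
    detZ m x ≠ 0 ∨ detZ m' x ≠ 0 := by
  by_contra! h
  have hsub := hb.coord₁_smul_add_coord₂_smul (m - m')
  rw [map_sub, hdeg, sub_self, zero_smul, zero_add] at hsub
  set k := coord₂ m₁ m₂ (m - m')
  have hk : k ≠ 0 := by
    rintro hk
    rw [hk, zero_smul, eq_comm, sub_eq_zero] at hsub
    exact hne hsub
  have h₁ : m.1 - m'.1 = k * m₂.1 := by simpa using congrArg Prod.fst hsub.symm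
  have h₂ : m.2 - m'.2 = k * m₂.2 := by simpa using congrArg Prod.snd hsub.symm
  have hkey : k * (detZ m₁ m₂ * coord₁ m₁ m₂ x) = 0 := by
    have hα := hb.detZ_mul_self
    simp only [coord₁_apply, detZ] at h hα ⊢
    linear_combination k * (x.1 * m₂.2 - x.2 * m₂.1) * hα - h.1 + h.2 + x.2 * h₁ - x.1 * h₂
  have hα : detZ m₁ m₂ ≠ 0 := fun h0 => by simpa [h0] using hb.detZ_mul_self
  exact mul_ne_zero hk (mul_ne_zero hα hx) hkey

lemma exists_coord₁_eq_add_one_detZ_ne_zero {m₁ m₂ : ℤ × ℤ} (hb : IsZBasis m₁ m₂) {x : ℤ × ℤ}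
    (hx : coord₁ m₁ m₂ x ≠ 0) :
    ∃ m, coord₁ m₁ m₂ m = coord₁ m₁ m₂ x + 1 ∧ detZ m x ≠ 0 := by
  have hne : m₁ ≠ m₁ + m₂ := fun h => by
    simpa [hb.coord₂_fst, hb.coord₂_snd] using congrArg (coord₂ m₁ m₂) h
  have hdeg : coord₁ m₁ m₂ m₁ = coord₁ m₁ m₂ (m₁ + m₂) := by
    rw [map_add, hb.coord₁_snd, add_zero]
  have hshift : ∀ w, detZ (x + w) x = detZ w x := fun w => by
    simp only [detZ, Prod.fst_add, Prod.snd_add]; ring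
  rcases hb.detZ_ne_zero_or_detZ_ne_zero hne hdeg hx with h | h
  · exact ⟨x + m₁, by rw [map_add, hb.coord₁_fst], by rwa [hshift]⟩
  · exact ⟨x + (m₁ + m₂), by rw [map_add, ← hdeg, hb.coord₁_fst], by rwa [hshift]⟩

end IsZBasis

end Lattice

section Cones

variable {b₁ b₂ : ℤ × ℤ}

def cone (b₁ b₂ : ℤ × ℤ) (c : ℤ) : Set (ℤ × ℤ) :=
  {x | c ≤ coord₁ b₁ b₂ x ∧ c ≤ coord₂ b₁ b₂ x}

def halfPlane (m₁ m₂ : ℤ × ℤ) (t : ℤ) : Set (ℤ × ℤ) := {x | t ≤ coord₁ m₁ m₂ x}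

lemma cone_anti : Antitone (cone b₁ b₂) :=
  fun _ _ h _ hx => ⟨h.trans hx.1, h.trans hx.2⟩

lemma halfPlane_anti : Antitone (halfPlane m₁ m₂) :=
  fun _ _ h _ hx => h.trans hx

lemma IsZBasis.smul_add_smul_mem_cone (h : IsZBasis b₁ b₂) {c a b : ℤ} (ha : c ≤ a) (hb : c ≤ b) :
    a • b₁ + b • b₂ ∈ cone b₁ b₂ c := by
  refine ⟨?_, ?_⟩
  · rwa [h.coord₁_smul_add_smul]
  · rwa [h.coord₂_smul_add_smul]

lemma IsZBasis.cone_zero_subset {b₁' b₂' : ℤ × ℤ} (h : IsZBasis b₁' b₂')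
    (h₁ : b₁' ∈ cone b₁ b₂ 0) (h₂ : b₂' ∈ cone b₁ b₂ 0) : cone b₁' b₂' 0 ⊆ cone b₁ b₂ 0 := by
  rintro x ⟨ha, hb⟩
  rw [← h.coord₁_smul_add_coord₂_smul x]
  refine ⟨?_, ?_⟩ <;> simp only [map_add, map_zsmul, smul_eq_mul]
  · exact add_nonneg (mul_nonneg ha h₁.1) (mul_nonneg hb h₂.1)
  · exact add_nonneg (mul_nonneg ha h₁.2) (mul_nonneg hb h₂.2)

/-- Euclid's algorithm on the values `f b₁, f b₂`: replacing `b₁` or `b₂` by `b₁ + b₂` shrinks the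
cone. -/
theorem IsZBasis.exists_cone_subset_sameSign (f : ℤ × ℤ →ₗ[ℤ] ℤ) (h : IsZBasis b₁ b₂) :
    ∃ b₁' b₂', IsZBasis b₁' b₂' ∧ cone b₁' b₂' 0 ⊆ cone b₁ b₂ 0 ∧
      (0 ≤ f b₁' ∧ 0 ≤ f b₂' ∨ f b₁' ≤ 0 ∧ f b₂' ≤ 0) := by
  induction hn : (f b₁).natAbs + (f b₂).natAbs using Nat.strong_induction_on
    generalizing b₁ b₂ with
  | _ n ih =>
  by_cases hs : 0 ≤ f b₁ ∧ 0 ≤ f b₂ ∨ f b₁ ≤ 0 ∧ f b₂ ≤ 0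
  · exact ⟨b₁, b₂, h, subset_rfl, hs⟩
  have h₁ : b₁ ∈ cone b₁ b₂ 0 := by simpa using h.smul_add_smul_mem_cone zero_le_one le_rfl
  have h₂ : b₂ ∈ cone b₁ b₂ 0 := by simpa using h.smul_add_smul_mem_cone le_rfl zero_le_one
  have h₁₂ : b₁ + b₂ ∈ cone b₁ b₂ 0 := by
    simpa using h.smul_add_smul_mem_cone zero_le_one zero_le_one
  rcases le_total (f b₁).natAbs (f b₂).natAbs with hle | hle
  · obtain ⟨b₁', b₂', h', hsub, hsign⟩ :=
      ih _ (by rw [map_add]; omega) h.add_right rfl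
    exact ⟨b₁', b₂', h', hsub.trans (h.add_right.cone_zero_subset h₁ h₁₂), hsign⟩
  · obtain ⟨b₁', b₂', h', hsub, hsign⟩ :=
      ih _ (by rw [map_add]; omega) h.add_left rfl
    exact ⟨b₁', b₂', h', hsub.trans (h.add_left.cone_zero_subset h₁₂ h₂), hsign⟩

/-- Sylvester's solution of the coin problem for coprime `p, r ≥ 0`. -/
lemma exists_nonneg_mul_add_mul_eq {p r u v : ℤ} (hp : 0 ≤ p) (hr : 0 ≤ r)
    (huv : u * p + v * r = 1) :
    ∃ T, ∀ n, T ≤ n → ∃ a b : ℤ, 0 ≤ a ∧ 0 ≤ b ∧ a * p + b * r = n := by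
  rcases hr.eq_or_lt with rfl | hr
  · have hp1 : p = 1 := Int.eq_one_of_mul_eq_one_left (a := u) hp (by linear_combination huv)
    exact ⟨0, fun n hn => ⟨n, 0, hn, le_rfl, by rw [hp1]; ring⟩⟩
  refine ⟨(r - 1) * p, fun n hn => ?_⟩
  have hmod : u * n % r + r * (u * n / r) = u * n := Int.emod_add_mul_ediv _ _
  refine ⟨u * n % r, v * n + p * (u * n / r), Int.emod_nonneg _ hr.ne', ?_,
    by linear_combination n * huv + p * hmod⟩
  have hlt : u * n % r < r := Int.emod_lt_of_pos _ hr
  have hb : (v * n + p * (u * n / r)) * r = n - u * n % r * p := by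
    linear_combination n * huv + p * hmod
  nlinarith [Int.emod_nonneg (u * n) hr.ne']

/-- The cone has two distinct points of each large degree, and they are not both parallel to `x`. -/
lemma IsZBasis.exists_mem_cone_detZ_ne_zero (hb : IsZBasis m₁ m₂) (hbb : IsZBasis b₁ b₂)
    (h₁ : 0 ≤ coord₁ m₁ m₂ b₁) (h₂ : 0 ≤ coord₁ m₁ m₂ b₂) (c : ℤ) :
    ∃ T, ∀ x, T ≤ coord₁ m₁ m₂ x →
      ∃ m ∈ cone b₁ b₂ c, coord₁ m₁ m₂ m = coord₁ m₁ m₂ x + 1 ∧ detZ m x ≠ 0 := by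
  set p := coord₁ m₁ m₂ b₁
  set r := coord₁ m₁ m₂ b₂
  have huv : coord₁ b₁ b₂ m₁ * p + coord₂ b₁ b₂ m₁ * r = 1 := by
    have := congrArg (coord₁ m₁ m₂) (hbb.coord₁_smul_add_coord₂_smul m₁)
    rwa [map_add, map_zsmul, map_zsmul, hb.coord₁_fst, smul_eq_mul, smul_eq_mul] at this
  have hpr : p ≠ 0 ∨ r ≠ 0 := by
    by_contra! h
    rw [h.1, h.2] at huv
    simp at huv
  obtain ⟨T, hT⟩ := exists_nonneg_mul_add_mul_eq h₁ h₂ huv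
  refine ⟨max 1 (T + c * p + (c + p) * r - 1), fun x hx => ?_⟩
  obtain ⟨a, b, ha, hb', hab⟩ := hT (coord₁ m₁ m₂ x + 1 - c * p - (c + p) * r) (by
    have := le_of_max_le_right hx; linarith)
  have hdeg : ∀ A B : ℤ, coord₁ m₁ m₂ (A • b₁ + B • b₂) = A * p + B * r := fun A B => by
    rw [map_add, map_zsmul, map_zsmul, smul_eq_mul, smul_eq_mul]
  have hne : (c + a) • b₁ + (c + p + b) • b₂ ≠ (c + a + r) • b₁ + (c + b) • b₂ := fun h => by
    have e₁ := congrArg (coord₁ b₁ b₂) h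
    have e₂ := congrArg (coord₂ b₁ b₂) h
    rw [hbb.coord₁_smul_add_smul, hbb.coord₁_smul_add_smul] at e₁
    rw [hbb.coord₂_smul_add_smul, hbb.coord₂_smul_add_smul] at e₂
    omega
  have hx0 : coord₁ m₁ m₂ x ≠ 0 := by have := le_of_max_le_left hx; omega
  rcases hb.detZ_ne_zero_or_detZ_ne_zero hne (by rw [hdeg, hdeg]; ring) hx0 with h | h
  · exact ⟨_, hbb.smul_add_smul_mem_cone (by omega) (by omega), by rw [hdeg]; linarith, h⟩
  · exact ⟨_, hbb.smul_add_smul_mem_cone (by omega) (by omega), by rw [hdeg]; linarith, h⟩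

end Cones

section Annihilators

lemma sgn_sq (a : ℤ) (i : ZMod 2) : sgn a i ^ 2 = 1 := by
  unfold sgn
  split_ifs
  · exact one_pow 2
  · rw [← zpow_natCast, ← zpow_mul, mul_comm, zpow_mul]; norm_num

/-- The structure constants of `L` do not vanish on non-parallel vectors. -/
lemma Generic.sgn_mul_zpow_sub_ne_zero (hq : Generic q) (a b : ℤ) (i j : ZMod 2) {k l : ℤ}
    (hkl : k ≠ l) : sgn a i * q ^ k - sgn b j * q ^ l ≠ 0 := by
  intro h
  have hsq : (q ^ k) ^ 2 = (q ^ l) ^ 2 := by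
    have := congrArg (· ^ 2) (sub_eq_zero.1 h)
    simpa only [mul_pow, sgn_sq, one_mul] using this
  simp only [← zpow_natCast, ← zpow_mul, Nat.cast_ofNat] at hsq
  refine hq.2 (k * 2 - l * 2) (by omega) ?_
  rw [zpow_sub₀ hq.1, hsq, div_self (zpow_ne_zero _ hq.1)]

lemma LData.lie_t_t (D : LData q L) (i j : ZMod 2) {m n : ℤ × ℤ} (h : m + n ≠ 0) :
    ⁅D.t i m, D.t j n⁆ =
      (sgn m.1 j * q ^ (m.2 * n.1) - sgn n.1 i * q ^ (m.1 * n.2)) • D.t (i + j) (m + n) := by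
  rw [D.bracket_tt, if_neg fun h' => h h'.2, zero_smul, add_zero]
  rfl

variable (D V) in
def LData.annihilator (S : Set (ℤ × ℤ)) : Submodule ℂ V :=
  ⨅ x ∈ S, ⨅ i, LinearMap.ker (LieModule.toEnd ℂ L V (D.t i x))

lemma LData.mem_annihilator {S : Set (ℤ × ℤ)} {u : V} :
    u ∈ D.annihilator V S ↔ ∀ x ∈ S, ∀ i, ⁅D.t i x, u⁆ = 0 := by
  simp [LData.annihilator]

lemma LData.annihilator_anti : Antitone (D.annihilator V) :=
  fun _ _ h => biInf_mono h

lemma LData.annihilator_cone_mono {b₁ b₂ : ℤ × ℤ} :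
    Monotone fun c => D.annihilator V (cone b₁ b₂ c) :=
  fun _ _ h => D.annihilator_anti (cone_anti h)

lemma LData.annihilator_halfPlane_mono : Monotone fun t => D.annihilator V (halfPlane m₁ m₂ t) :=
  fun _ _ h => D.annihilator_anti (halfPlane_anti h)

lemma LData.lie_mem_annihilator_of_central {z : L} (hz : ∀ y : L, ⁅z, y⁆ = 0)
    {S : Set (ℤ × ℤ)} {u : V} (hu : u ∈ D.annihilator V S) : ⁅z, u⁆ ∈ D.annihilator V S := by
  rw [LData.mem_annihilator] at hu ⊢
  intro x hx i
  rw [leibniz_lie, ← lie_skew, hz, neg_zero, zero_lie, zero_add, hu x hx i, lie_zero]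

/-- Bracketing with `t_0^j t^n` moves the cone annihilated by `u` by `n`. -/
lemma LData.exists_lie_t_mem_annihilator_cone {b₁ b₂ : ℤ × ℤ} {c : ℤ} {u : V}
    (hu : u ∈ D.annihilator V (cone b₁ b₂ c)) (j : ZMod 2) (n : ℤ × ℤ) :
    ∃ c', ⁅D.t j n, u⁆ ∈ D.annihilator V (cone b₁ b₂ c') := by
  refine ⟨max c (max (max c 1 - coord₁ b₁ b₂ n) (max c 1 - coord₂ b₁ b₂ n)), ?_⟩
  rw [LData.mem_annihilator] at hu ⊢
  rintro x ⟨hx₁, hx₂⟩ i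
  have hxn : x + n ∈ cone b₁ b₂ c := by
    constructor <;> rw [map_add] <;> omega
  have hxn₁ : 1 ≤ coord₁ b₁ b₂ (x + n) := by rw [map_add]; omega
  have hxn0 : x + n ≠ 0 := fun h0 => by rw [h0, map_zero] at hxn₁; omega
  rw [leibniz_lie, D.lie_t_t i j hxn0, smul_lie, hu _ hxn, smul_zero, zero_add,
    hu x ⟨by omega, by omega⟩, lie_zero]

variable (D) in
lemma LData.lieSpan_le {N : Submodule ℂ V} (ht : ∀ i m, ∀ u ∈ N, ⁅D.t i m, u⁆ ∈ N)
    (hc₁ : ∀ u ∈ N, ⁅D.c1, u⁆ ∈ N) (hc₂ : ∀ u ∈ N, ⁅D.c2, u⁆ ∈ N) {v : V} (hv : v ∈ N) :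
    (LieSubmodule.lieSpan ℂ L {v} : Submodule ℂ V) ≤ N := by
  have hL : ∀ x : L, ∀ u ∈ N, ⁅x, u⁆ ∈ N := by
    intro x
    have hx : x ∈ Submodule.span ℂ
        ((Set.range fun p : ZMod 2 × (ℤ × ℤ) => D.t p.1 p.2) ∪ {D.c1, D.c2}) := by
      rw [D.span_eq]; trivial
    induction hx using Submodule.span_induction with
    | mem x hx =>
      rcases hx with ⟨p, rfl⟩ | rfl | rfl
      exacts [ht p.1 p.2, hc₁, hc₂]
    | zero => intro u _; rw [zero_lie]; exact N.zero_mem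
    | add x y _ _ hx hy => intro u hu; rw [add_lie]; exact N.add_mem (hx u hu) (hy u hu)
    | smul a x _ hx => intro u hu; rw [smul_lie]; exact N.smul_mem a (hx u hu)
  let N' : LieSubmodule ℂ L V := { N with lie_mem := fun hu => hL _ _ hu }
  exact LieSubmodule.lieSpan_le (N := N').2 (Set.singleton_subset_iff.2 hv)

theorem LData.iSup_annihilator_cone_eq_top {b₁ b₂ : ℤ × ℤ} {v : V}
    (hgen : LieSubmodule.lieSpan ℂ L {v} = ⊤) (hv : v ∈ D.annihilator V (cone b₁ b₂ 0)) :
    ⨆ c, D.annihilator V (cone b₁ b₂ c) = ⊤ := by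
  have hmem : ∀ u : V, u ∈ ⨆ c, D.annihilator V (cone b₁ b₂ c) ↔
      ∃ c, u ∈ D.annihilator V (cone b₁ b₂ c) := fun u =>
    Submodule.mem_iSup_of_directed _ D.annihilator_cone_mono.directed_le
  have hcentral : ∀ z : L, (∀ y : L, ⁅z, y⁆ = 0) →
      ∀ u ∈ ⨆ c, D.annihilator V (cone b₁ b₂ c), ⁅z, u⁆ ∈ ⨆ c, D.annihilator V (cone b₁ b₂ c) := by
    intro z hz u hu
    obtain ⟨c, hc⟩ := (hmem u).1 hu
    exact (hmem _).2 ⟨c, D.lie_mem_annihilator_of_central hz hc⟩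
  rw [eq_top_iff, ← LieSubmodule.top_toSubmodule (R := ℂ) (L := L), ← hgen]
  refine D.lieSpan_le (fun i m u hu => ?_) (hcentral _ D.c1_central) (hcentral _ D.c2_central)
    ((hmem v).2 ⟨0, hv⟩)
  obtain ⟨c, hc⟩ := (hmem u).1 hu
  exact (hmem _).2 (D.exists_lie_t_mem_annihilator_cone hc i m)

lemma _root_.Submodule.FG.exists_le_of_le_iSup {R M ι : Type*} [Semiring R] [AddCommMonoid M]
    [Module R M] [Nonempty ι] [Preorder ι] [IsDirectedOrder ι] {W : Submodule R M} (hW : W.FG)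
    {f : ι → Submodule R M} (hf : Monotone f) (hle : W ≤ ⨆ i, f i) : ∃ i, W ≤ f i := by
  obtain ⟨s, hs⟩ := CompleteLattice.IsCompactElement.exists_finset_of_le_iSup _
    ((Submodule.fg_iff_compact W).1 hW) f hle
  obtain ⟨i, hi⟩ := s.exists_le
  exact ⟨i, hs.trans (iSup₂_le fun j hj => hf (hi j hj))⟩

end Annihilators

section Descent

variable (D m₁ m₂) in
def IsTGrading (M : ℤ → Submodule ℂ V) : Prop :=
  ∀ i x k, ∀ u ∈ M k, ⁅D.t i x, u⁆ ∈ M (k + coord₁ m₁ m₂ x)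

variable {M : ℤ → Submodule ℂ V}

lemma IsTGrading.neg {W : Type} [AddCommGroup W] [Module ℂ W] [LieRingModule L W]
    {N : ℤ → Submodule ℂ W} (hN : IsTGrading D m₁ m₂ N) : IsTGrading D (-m₁) m₂ fun k => N (-k) := by
  intro i x k u hu
  simpa only [coord₁_neg_left, neg_add, neg_neg] using hN i x (-k) u hu

/-- `x - m` has degree `-1`, and `⁅t_0^0 t^m, t_0^i t^{x-m}⁆` is a nonzero multiple of `t_0^i t^x`. -/
lemma IsTGrading.lie_t_eq_zero (hq : Generic q) (hM : IsTGrading D m₁ m₂ M) {e : ℤ}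
    {m x : ℤ × ℤ} (hx : x ≠ 0) (hdeg : coord₁ m₁ m₂ m = coord₁ m₁ m₂ x + 1)
    (hdet : detZ m x ≠ 0) (he : M e ≤ D.annihilator V {m}) (he' : M (e - 1) ≤ D.annihilator V {m})
    (i : ZMod 2) {u : V} (hu : u ∈ M e) : ⁅D.t i x, u⁆ = 0 := by
  have hy : ⁅D.t i (x - m), u⁆ ∈ M (e - 1) := by
    have := hM i (x - m) e u hu
    rwa [map_sub, hdeg, show e + (coord₁ m₁ m₂ x - (coord₁ m₁ m₂ x + 1)) = e - 1 by ring] at this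
  have h₁ := D.mem_annihilator.1 (he' hy) m rfl 0
  have h₂ := D.mem_annihilator.1 (he hu) m rfl 0
  have hsum : m + (x - m) = x := add_sub_cancel m x
  have hbr : ⁅⁅D.t 0 m, D.t i (x - m)⁆, u⁆ = 0 := by rw [lie_lie, h₁, h₂, lie_zero, sub_zero]
  rw [D.lie_t_t 0 i (by rwa [hsum]), smul_lie, hsum, zero_add] at hbr
  refine (smul_eq_zero.1 hbr).resolve_left (hq.sgn_mul_zpow_sub_ne_zero _ _ _ _ fun h => hdet ?_)
  simp only [detZ, Prod.fst_sub, Prod.snd_sub] at h ⊢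
  linear_combination -h

lemma IsTGrading.exists_le_annihilator_halfPlane (hq : Generic q) (hb : IsZBasis m₁ m₂)
    (hM : IsTGrading D m₁ m₂ M) {b₁ b₂ : ℤ × ℤ} (hbb : IsZBasis b₁ b₂)
    (h₁ : 0 ≤ coord₁ m₁ m₂ b₁) (h₂ : 0 ≤ coord₁ m₁ m₂ b₂) {e c : ℤ}
    (he : M e ≤ D.annihilator V (cone b₁ b₂ c)) (he' : M (e - 1) ≤ D.annihilator V (cone b₁ b₂ c)) :
    ∃ t, M e ≤ D.annihilator V (halfPlane m₁ m₂ t) := by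
  obtain ⟨T, hT⟩ := hb.exists_mem_cone_detZ_ne_zero hbb h₁ h₂ c
  refine ⟨max T 1, fun u hu => D.mem_annihilator.2 fun x (hx : max T 1 ≤ coord₁ m₁ m₂ x) i => ?_⟩
  obtain ⟨m, hmc, hdeg, hdet⟩ := hT x (le_of_max_le_left hx)
  have hx0 : x ≠ 0 := fun h0 => by
    have := le_of_max_le_right hx
    rw [h0, map_zero] at this
    omega
  have hm : D.annihilator V (cone b₁ b₂ c) ≤ D.annihilator V {m} :=
    D.annihilator_anti (Set.singleton_subset_iff.2 hmc)
  exact hM.lie_t_eq_zero hq hx0 hdeg hdet (he.trans hm) (he'.trans hm) i hu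

lemma IsTGrading.le_annihilator_halfPlane_sub_one (hq : Generic q) (hb : IsZBasis m₁ m₂)
    (hM : IsTGrading D m₁ m₂ M) {e t : ℤ} (ht : 2 ≤ t)
    (he : M e ≤ D.annihilator V (halfPlane m₁ m₂ t))
    (he' : M (e - 1) ≤ D.annihilator V (halfPlane m₁ m₂ t)) :
    M e ≤ D.annihilator V (halfPlane m₁ m₂ (t - 1)) := by
  refine fun u hu => D.mem_annihilator.2 fun x (hx : t - 1 ≤ coord₁ m₁ m₂ x) i => ?_
  by_cases hxt : t ≤ coord₁ m₁ m₂ x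
  · exact D.mem_annihilator.1 (he hu) x hxt i
  have hx0 : coord₁ m₁ m₂ x ≠ 0 := by omega
  obtain ⟨m, hdeg, hdet⟩ := hb.exists_coord₁_eq_add_one_detZ_ne_zero hx0
  have hm : D.annihilator V (halfPlane m₁ m₂ t) ≤ D.annihilator V {m} :=
    D.annihilator_anti (Set.singleton_subset_iff.2 (show t ≤ coord₁ m₁ m₂ m by omega))
  exact hM.lie_t_eq_zero hq (fun h0 => hx0 (by rw [h0, map_zero])) hdeg hdet (he.trans hm)
    (he'.trans hm) i hu

lemma le_one_of_two_le_imp_lt_sub_one {H : ℤ → ℕ} (hH : ∀ e, 2 ≤ H e → H e < H (e - 1))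
    {e₀ e : ℤ} (he : e₀ + H e₀ ≤ e) : H e ≤ 1 := by
  by_contra! h
  have hdown : ∀ n : ℕ, H e + n ≤ H (e - n) := by
    intro n
    induction n with
    | zero => simp
    | succ n ih =>
      have := hH (e - n) (by omega)
      rw [Nat.cast_succ, ← sub_sub]
      omega
  have := hdown (e - e₀).toNat
  rw [Int.toNat_of_nonneg (by omega), sub_sub_cancel] at this
  omega

/-- Either there is a top nonzero component, or one far enough up works: the least `t` for which
the half-plane `t` kills `M e` strictly increases as `e` decreases, as long as it is at least `2`. -/
theorem IsTGrading.exists_ne_bot_le_annihilator_halfPlane_one (hq : Generic q)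
    (hb : IsZBasis m₁ m₂) (hM : IsTGrading D m₁ m₂ M)
    (hhalf : ∀ e, ∃ t, M e ≤ D.annihilator V (halfPlane m₁ m₂ t)) (hne : ∃ e, M e ≠ ⊥) :
    ∃ e, M e ≠ ⊥ ∧ M e ≤ D.annihilator V (halfPlane m₁ m₂ 1) := by
  by_cases hbdd : ∃ b, ∀ e, M e ≠ ⊥ → e ≤ b
  · obtain ⟨e, he, hmax⟩ := Int.exists_greatest_of_bdd hbdd hne
    refine ⟨e, he, fun u hu => D.mem_annihilator.2 fun x (hx : 1 ≤ coord₁ m₁ m₂ x) i => ?_⟩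
    have hbot : M (e + coord₁ m₁ m₂ x) = ⊥ := by
      by_contra h
      have := hmax _ h
      omega
    simpa only [hbot, Submodule.mem_bot] using hM i x e u hu
  push Not at hbdd
  let H : ℤ → ℕ := fun e => sInf {t : ℕ | M e ≤ D.annihilator V (halfPlane m₁ m₂ t)}
  have hH : ∀ e, M e ≤ D.annihilator V (halfPlane m₁ m₂ (H e)) := fun e => by
    obtain ⟨t, ht⟩ := hhalf e
    exact Nat.sInf_mem (s := {t : ℕ | M e ≤ D.annihilator V (halfPlane m₁ m₂ t)})
      ⟨t.toNat, ht.trans (D.annihilator_halfPlane_mono (Int.self_le_toNat t))⟩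
  have hdesc : ∀ e, 2 ≤ H e → H e < H (e - 1) := by
    intro e h2
    by_contra! hle
    have hstep := hM.le_annihilator_halfPlane_sub_one hq hb (by exact_mod_cast h2) (hH e)
      ((hH (e - 1)).trans (D.annihilator_halfPlane_mono (by exact_mod_cast hle)))
    have : H e ≤ H e - 1 := Nat.sInf_le (by simpa [Nat.cast_sub (by omega : 1 ≤ H e)] using hstep)
    omega
  obtain ⟨e₀, -⟩ := hne
  obtain ⟨e, he, hlt⟩ := hbdd (e₀ + H e₀)
  refine ⟨e, he, (hH e).trans (D.annihilator_halfPlane_mono ?_)⟩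
  exact_mod_cast le_one_of_two_le_imp_lt_sub_one hdesc hlt.le

end Descent

section HighestWeight

lemma IsZBasis.t_mem_Lj (hb : IsZBasis m₁ m₂) (D : LData q L) (i : ZMod 2) (x : ℤ × ℤ) :
    D.t i x ∈ Lj D m₁ m₂ (coord₁ m₁ m₂ x) :=
  Submodule.subset_span
    (Or.inl ⟨(i, coord₂ m₁ m₂ x), congrArg (D.t i) (hb.coord₁_smul_add_coord₂_smul x)⟩)

lemma LData.c1_mem_Lj_zero (D : LData q L) : D.c1 ∈ Lj D m₁ m₂ 0 :=
  Submodule.subset_span (Or.inr (by rw [if_pos rfl]; exact Set.mem_insert _ _))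

lemma LData.c2_mem_Lj_zero (D : LData q L) : D.c2 ∈ Lj D m₁ m₂ 0 :=
  Submodule.subset_span (Or.inr (by rw [if_pos rfl]; exact Set.mem_insert_of_mem _ rfl))

variable (D) in
lemma LData.lie_eq_zero_of_mem_Lj {j : ℤ} (hj : j ≠ 0) {w : V}
    (hw : ∀ (i : ZMod 2) (k : ℤ), ⁅D.t i (j • m₁ + k • m₂), w⁆ = 0) {x : L} (hx : x ∈ Lj D m₁ m₂ j) :
    ⁅x, w⁆ = 0 := by
  induction hx using Submodule.span_induction with
  | mem x hx =>
    rw [if_neg hj, Set.union_empty] at hx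
    obtain ⟨p, rfl⟩ := hx
    exact hw p.1 p.2
  | zero => exact zero_lie w
  | add x y _ _ hx hy => rw [add_lie, hx, hy, add_zero]
  | smul a x _ hx => rw [smul_lie, hx, smul_zero]

variable (G : GradedRep D m₁ m₂ V)

lemma GradedRep.isTGrading (hb : IsZBasis m₁ m₂) : IsTGrading D m₁ m₂ G.comp :=
  fun i x k u hu => G.lie_mem _ k _ (hb.t_mem_Lj D i x) u hu

lemma GradedRep.isGradedSub_lieSpan (hb : IsZBasis m₁ m₂) {k : ℤ} {w : V} (hw : w ∈ G.comp k) :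
    G.IsGradedSub (LieSubmodule.lieSpan ℂ L {w}) := by
  set N := LieSubmodule.lieSpan ℂ L {w}
  have hL : ∀ j, ∀ y ∈ Lj D m₁ m₂ j, ∀ u ∈ ⨆ k, (N : Submodule ℂ V) ⊓ G.comp k,
      ⁅y, u⁆ ∈ ⨆ k, (N : Submodule ℂ V) ⊓ G.comp k := by
    intro j y hy u hu
    refine Submodule.iSup_induction _ (motive := fun u => ⁅y, u⁆ ∈ _) hu
      (fun k u hu => Submodule.mem_iSup_of_mem (k + j) ⟨N.lie_mem hu.1, G.lie_mem j k y hy u hu.2⟩)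
      (by rw [lie_zero]; exact zero_mem _) (fun u u' h h' => by rw [lie_add]; exact add_mem h h')
  refine le_antisymm ?_ (iSup_le fun k => inf_le_left)
  exact D.lieSpan_le (fun i x => hL _ _ (hb.t_mem_Lj D i x)) (hL 0 _ D.c1_mem_Lj_zero)
    (hL 0 _ D.c2_mem_Lj_zero) (Submodule.mem_iSup_of_mem k ⟨LieSubmodule.subset_lieSpan rfl, hw⟩)

lemma GradedRep.lieSpan_eq_top (hb : IsZBasis m₁ m₂) (hirr : G.IsIrreducible) {k : ℤ} {w : V}
    (hw : w ∈ G.comp k) (hw0 : w ≠ 0) : LieSubmodule.lieSpan ℂ L {w} = ⊤ :=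
  (hirr.2 _ (G.isGradedSub_lieSpan hb hw)).resolve_left fun h =>
    hw0 ((LieSubmodule.lieSpan_eq_bot_iff ℂ L V).1 h w rfl)

lemma GradedRep.isHW_of_le_annihilator (hb : IsZBasis m₁ m₂) (hirr : G.IsIrreducible) {e : ℤ}
    (he : G.comp e ≠ ⊥) (hle : G.comp e ≤ D.annihilator V (halfPlane m₁ m₂ 1)) : G.IsHW := by
  obtain ⟨w, hw, hw0⟩ := Submodule.exists_mem_ne_zero_of_ne_bot he
  refine ⟨e, w, hw, hw0, G.lieSpan_eq_top hb hirr hw hw0,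
    fun j hj x hx => D.lie_eq_zero_of_mem_Lj hj.ne' (fun i k => ?_) hx⟩
  refine D.mem_annihilator.1 (hle hw) _ ?_ i
  show 1 ≤ coord₁ m₁ m₂ (j • m₁ + k • m₂)
  rw [hb.coord₁_smul_add_smul]
  exact hj

lemma GradedRep.isLW_of_le_annihilator (hb : IsZBasis m₁ m₂) (hirr : G.IsIrreducible) {e : ℤ}
    (he : G.comp e ≠ ⊥) (hle : G.comp e ≤ D.annihilator V (halfPlane (-m₁) m₂ 1)) : G.IsLW := by
  obtain ⟨w, hw, hw0⟩ := Submodule.exists_mem_ne_zero_of_ne_bot he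
  refine ⟨e, w, hw, hw0, G.lieSpan_eq_top hb hirr hw hw0,
    fun j hj x hx => D.lie_eq_zero_of_mem_Lj hj.ne (fun i k => ?_) hx⟩
  refine D.mem_annihilator.1 (hle hw) _ ?_ i
  show 1 ≤ coord₁ (-m₁) m₂ (j • m₁ + k • m₂)
  rw [coord₁_neg_left, hb.coord₁_smul_add_smul]
  omega

lemma IsZBasis.mem_annihilator_cone_zero {b₁ b₂ : ℤ × ℤ} (hbb : IsZBasis b₁ b₂) {v : V}
    (hkill : ∀ (a b : ℕ) (i : ZMod 2), ⁅D.t i ((a : ℤ) • b₁ + (b : ℤ) • b₂), v⁆ = 0) :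
    v ∈ D.annihilator V (cone b₁ b₂ 0) := by
  refine D.mem_annihilator.2 fun x ⟨ha, hb⟩ i => ?_
  rw [← hbb.coord₁_smul_add_coord₂_smul x, ← Int.toNat_of_nonneg ha, ← Int.toNat_of_nonneg hb]
  exact hkill _ _ i

/-- Quasifiniteness makes each homogeneous component killed by a single shifted cone. -/
theorem IsTGrading.exists_ne_bot_le_annihilator_halfPlane_one_of_cone {M : ℤ → Submodule ℂ V}
    (hq : Generic q) (hb : IsZBasis m₁ m₂) (hM : IsTGrading D m₁ m₂ M)
    (hfin : ∀ k, FiniteDimensional ℂ (M k)) {b₁ b₂ : ℤ × ℤ} (hbb : IsZBasis b₁ b₂)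
    (h₁ : 0 ≤ coord₁ m₁ m₂ b₁) (h₂ : 0 ≤ coord₁ m₁ m₂ b₂)
    (htop : ⨆ c, D.annihilator V (cone b₁ b₂ c) = ⊤) (hne : ∃ e, M e ≠ ⊥) :
    ∃ e, M e ≠ ⊥ ∧ M e ≤ D.annihilator V (halfPlane m₁ m₂ 1) := by
  have hcone : ∀ e, ∃ c, M e ≤ D.annihilator V (cone b₁ b₂ c) := fun e =>
    Submodule.FG.exists_le_of_le_iSup (Module.Finite.iff_fg.1 (hfin e)) D.annihilator_cone_mono
      (htop ▸ le_top)
  refine hM.exists_ne_bot_le_annihilator_halfPlane_one hq hb (fun e => ?_) hne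
  obtain ⟨c, hc⟩ := hcone e
  obtain ⟨c', hc'⟩ := hcone (e - 1)
  exact hM.exists_le_annihilator_halfPlane hq hb hbb h₁ h₂
    (hc.trans (D.annihilator_cone_mono (le_max_left c c')))
    (hc'.trans (D.annihilator_cone_mono (le_max_right c c')))

end HighestWeight

/-- a quasifinite irreducible ℤ-graded `L`-module which is a generalized
highest weight module is a highest weight module or a lowest weight module. -/
theorem GHW_quasifinite_is_HW_or_LW (q : ℂ) (hq : Generic q)
    {L : Type} [LieRing L] [LieAlgebra ℂ L] (D : LData q L)
    (m₁ m₂ : ℤ × ℤ) (hb : IsZBasis m₁ m₂)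
    {V : Type} [AddCommGroup V] [Module ℂ V] [LieRingModule L V] [LieModule ℂ L V]
    (G : GradedRep D m₁ m₂ V) (hirr : G.IsIrreducible)
    (hqf : G.Quasifinite) (hghw : G.IsGHW) :
    G.IsHW ∨ G.IsLW := by
  obtain ⟨b₁, b₂, hbb, dg, v, hv, hv0, hgen, hkill⟩ := hghw
  obtain ⟨b₁', b₂', hbb', hsub, hsign⟩ := hbb.exists_cone_subset_sameSign (coord₁ m₁ m₂)
  have htop : ⨆ c, D.annihilator V (cone b₁' b₂' c) = ⊤ :=
    D.iSup_annihilator_cone_eq_top hgen (D.annihilator_anti hsub (hbb.mem_annihilator_cone_zero hkill))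
  have hne : G.comp dg ≠ ⊥ := fun h => hv0 ((Submodule.mem_bot ℂ).1 (h ▸ hv))
  rcases hsign with ⟨h₁, h₂⟩ | ⟨h₁, h₂⟩
  · obtain ⟨e, he, hle⟩ := (G.isTGrading hb).exists_ne_bot_le_annihilator_halfPlane_one_of_cone
      hq hb hqf hbb' h₁ h₂ htop ⟨dg, hne⟩
    exact Or.inl (G.isHW_of_le_annihilator hb hirr he hle)
  · obtain ⟨e, he, hle⟩ := (G.isTGrading hb).neg.exists_ne_bot_le_annihilator_halfPlane_one_of_cone
      hq hb.neg_left (fun k => hqf (-k)) hbb' (by rwa [coord₁_neg_left, neg_nonneg])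
      (by rwa [coord₁_neg_left, neg_nonneg]) htop ⟨-dg, by rwa [neg_neg]⟩
    exact Or.inr (G.isLW_of_le_annihilator hb hirr he hle)

end QTorus
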